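/- Let U be a triangular ring with standard idempotent P, Q = I − P, and let G = (δ_i) be an additive generalized Jordan higher derivation with relating higher derivation D = (τ_i), satisfying δ_n(QXQ) = Σ_{i+j=n} δ_i(Q)τ_j(QXQ)Q for all X. Then δ_n(QXQYQ) = Σ_{i+j=n} δ_i(QXQ)τ_j(QYQ) for all X, Y ∈ U. -/

import Mathlib

set_option linter.unusedSectionVars false

/-- The triangular ring `Tri A M B` of formal upper triangular matrices
`[[a, m], [0, b]]` with `a ∈ A`, `m ∈ M`, `b ∈ B`, where `M` is an
`(A, B)`-bimodule (the right `B`-action encoded as a left `Bᵐᵒᵖ`-action). -/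
@[ext]
structure Tri (A M B : Type*) where
  a : A
  m : M
  b : B

namespace Tri

variable {A M B : Type*} [Ring A] [Ring B] [AddCommGroup M]
  [Module A M] [Module Bᵐᵒᵖ M] [SMulCommClass A Bᵐᵒᵖ M]

instance : Add (Tri A M B) := ⟨fun x y => ⟨x.a + y.a, x.m + y.m, x.b + y.b⟩⟩
instance : Zero (Tri A M B) := ⟨⟨0, 0, 0⟩⟩
instance : Neg (Tri A M B) := ⟨fun x => ⟨-x.a, -x.m, -x.b⟩⟩
instance : One (Tri A M B) := ⟨⟨1, 0, 1⟩⟩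
instance : Mul (Tri A M B) :=
  ⟨fun x y => ⟨x.a * y.a, x.a • y.m + MulOpposite.op y.b • x.m, x.b * y.b⟩⟩

@[simp] lemma add_a (x y : Tri A M B) : (x + y).a = x.a + y.a := rfl
@[simp] lemma add_m (x y : Tri A M B) : (x + y).m = x.m + y.m := rfl
@[simp] lemma add_b (x y : Tri A M B) : (x + y).b = x.b + y.b := rfl
@[simp] lemma zero_a : (0 : Tri A M B).a = 0 := rfl
@[simp] lemma zero_m : (0 : Tri A M B).m = 0 := rfl
@[simp] lemma zero_b : (0 : Tri A M B).b = 0 := rfl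
@[simp] lemma neg_a (x : Tri A M B) : (-x).a = -x.a := rfl
@[simp] lemma neg_m (x : Tri A M B) : (-x).m = -x.m := rfl
@[simp] lemma neg_b (x : Tri A M B) : (-x).b = -x.b := rfl
@[simp] lemma one_a : (1 : Tri A M B).a = 1 := rfl
@[simp] lemma one_m : (1 : Tri A M B).m = 0 := rfl
@[simp] lemma one_b : (1 : Tri A M B).b = 1 := rfl
@[simp] lemma mul_a (x y : Tri A M B) : (x * y).a = x.a * y.a := rfl
@[simp] lemma mul_m (x y : Tri A M B) :
    (x * y).m = x.a • y.m + MulOpposite.op y.b • x.m := rfl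
@[simp] lemma mul_b (x y : Tri A M B) : (x * y).b = x.b * y.b := rfl

/-- The triangular ring structure on `Tri A M B`. -/
instance : Ring (Tri A M B) where
  add_assoc x y z := by ext <;> simp [add_assoc]
  zero_add x := by ext <;> simp
  add_zero x := by ext <;> simp
  add_comm x y := by ext <;> simp [add_comm]
  neg_add_cancel x := by ext <;> simp
  nsmul := nsmulRec
  zsmul := zsmulRec
  left_distrib x y z := by ext <;> simp [mul_add, smul_add, add_smul] <;> abel
  right_distrib x y z := by ext <;> simp [add_mul, smul_add, add_smul] <;> abel
  zero_mul x := by ext <;> simp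
  mul_zero x := by ext <;> simp
  mul_assoc x y z := by
    ext <;> simp [mul_assoc, mul_smul, smul_add, smul_comm] <;> abel
  one_mul x := by ext <;> simp
  mul_one x := by ext <;> simp

end Tri

variable (A M B : Type*) [Ring A] [Ring B] [AddCommGroup M]
  [Module A M] [Module Bᵐᵒᵖ M] [SMulCommClass A Bᵐᵒᵖ M]

/-- The standard idempotent `P = [[1,0],[0,0]]` of the triangular ring. -/
def Tri.P : Tri A M B := ⟨1, 0, 0⟩

variable {A M B}

/-- Membership in the corner `P·U·Q` of the triangular ring `U`,
where `Q = 1 - P`. -/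
def Tri.inPUQ (x : Tri A M B) : Prop :=
  ∃ s : Tri A M B, x = Tri.P A M B * s * (1 - Tri.P A M B)

/-- Membership in `P·U·P + P·U·Q`. -/
def Tri.inPUPQ (x : Tri A M B) : Prop :=
  ∃ s t : Tri A M B,
    x = Tri.P A M B * s * Tri.P A M B + Tri.P A M B * t * (1 - Tri.P A M B)

/-- Membership in `Q·U·Q + P·U·Q`. -/
def Tri.inQUQQ (x : Tri A M B) : Prop :=
  ∃ s t : Tri A M B,
    x = (1 - Tri.P A M B) * s * (1 - Tri.P A M B) +
      Tri.P A M B * t * (1 - Tri.P A M B)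

/-!
Multiplicativity of `τ` and the hypothesis expand `δ_n(QXQ·QYQ)` into the triple sum
`Σ_{i+k+l=n} δ_i(Q) τ_k(QXQ) τ_l(QYQ) Q`. Each `τ_j(QZQ)` lies in `QUQ + PUQ = UQ` and is therefore
fixed by right multiplication by `Q`, so the trailing `Q` may be dropped and one inserted after
`τ_k(QXQ)` instead; regrouping by `i + k` turns the inner sums back into `δ_{i+k}(QXQ)` by the
same hypothesis.
-/

theorem Finset.sum_antidiagonal_sum_antidiagonal_assoc {A S : Type*} [AddMonoid A]
    [Finset.HasAntidiagonal A] [AddCommMonoid S] (n : A) (f : A → A → A → S) :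
    ∑ ij ∈ antidiagonal n, ∑ kl ∈ antidiagonal ij.2, f ij.1 kl.1 kl.2 =
      ∑ ij ∈ antidiagonal n, ∑ kl ∈ antidiagonal ij.1, f kl.1 kl.2 ij.2 := by
  simp only [sum_sigma']
  apply sum_nbij' (fun ⟨⟨i, _⟩, ⟨k, l⟩⟩ ↦ ⟨(i + k, l), (i, k)⟩)
    (fun ⟨⟨_, l⟩, ⟨i, k⟩⟩ ↦ ⟨(i, k + l), (k, l)⟩) <;> aesop (add simp [add_assoc])

section Corner

open Finset

variable {R : Type*} [Ring R] {q : R}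

theorem map_corner_mul_corner_eq_sum_antidiagonal (hq : IsIdempotentElem q)
    (δ τ : ℕ → R → R) (n : ℕ)
    (hτ : ∀ k x y, τ k (x * y) = ∑ ij ∈ antidiagonal k, τ ij.1 x * τ ij.2 y)
    (hτq : ∀ k x, τ k (q * x * q) * q = τ k (q * x * q))
    (hδ : ∀ m ≤ n, ∀ x, δ m (q * x * q) =
      ∑ ij ∈ antidiagonal m, δ ij.1 q * τ ij.2 (q * x * q) * q) (x y : R) :
    δ n (q * x * q * y * q) = ∑ ij ∈ antidiagonal n, δ ij.1 (q * x * q) * τ ij.2 (q * y * q) := by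
  have hsplit : q * x * q * y * q = q * (x * q * y) * q := by simp only [mul_assoc]
  have hcorner : q * x * q * y * q = (q * x * q) * (q * y * q) :=
    calc q * x * q * y * q = q * x * (q * q) * y * q := by rw [hq.eq]
      _ = (q * x * q) * (q * y * q) := by simp only [mul_assoc]
  calc δ n (q * x * q * y * q)
      = ∑ ij ∈ antidiagonal n, ∑ kl ∈ antidiagonal ij.2,
          δ ij.1 q * τ kl.1 (q * x * q) * τ kl.2 (q * y * q) := by
        rw [hsplit, hδ n le_rfl, ← hsplit, hcorner]
        refine sum_congr rfl fun ij _ ↦ ?_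
        rw [hτ, mul_sum, sum_mul]
        refine sum_congr rfl fun kl _ ↦ ?_
        rw [mul_assoc, mul_assoc, hτq, ← mul_assoc]
    _ = ∑ ij ∈ antidiagonal n, ∑ kl ∈ antidiagonal ij.1,
          δ kl.1 q * τ kl.2 (q * x * q) * τ ij.2 (q * y * q) :=
        sum_antidiagonal_sum_antidiagonal_assoc n fun i k l ↦
          δ i q * τ k (q * x * q) * τ l (q * y * q)
    _ = ∑ ij ∈ antidiagonal n, δ ij.1 (q * x * q) * τ ij.2 (q * y * q) := by
        refine sum_congr rfl fun ij hij ↦ ?_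
        rw [hδ ij.1 (HasAntidiagonal.antidiagonal.fst_le hij), sum_mul]
        refine sum_congr rfl fun kl _ ↦ ?_
        rw [mul_assoc (δ kl.1 q) _ q, hτq, mul_assoc]

end Corner

namespace Tri

variable {A M B : Type*} [Ring A] [Ring B] [AddCommGroup M]
  [Module A M] [Module Bᵐᵒᵖ M] [SMulCommClass A Bᵐᵒᵖ M]

theorem isIdempotentElem_P : IsIdempotentElem (P A M B) := by
  ext <;> simp [P]

theorem inQUQQ.mul_one_sub_P {x : Tri A M B} (hx : x.inQUQQ) : x * (1 - P A M B) = x := by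
  obtain ⟨s, t, rfl⟩ := hx
  rw [add_mul, mul_assoc _ (1 - P A M B), mul_assoc _ (1 - P A M B),
    isIdempotentElem_P.one_sub.eq]

end Tri

theorem stmt12_general (δ τ : ℕ → Tri A M B → Tri A M B) (n : ℕ)
    (hτHD : ∀ k X Y, τ k (X * Y) = ∑ ij ∈ Finset.HasAntidiagonal.antidiagonal k, τ ij.1 X * τ ij.2 Y)
    (hτQUQ : ∀ j X, Tri.inQUQQ (τ j ((1 - Tri.P A M B) * X * (1 - Tri.P A M B))))
    (hQXQ : ∀ m ≤ n, ∀ X, δ m ((1 - Tri.P A M B) * X * (1 - Tri.P A M B)) =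
      ∑ ij ∈ Finset.HasAntidiagonal.antidiagonal m,
        δ ij.1 (1 - Tri.P A M B) *
          τ ij.2 ((1 - Tri.P A M B) * X * (1 - Tri.P A M B)) * (1 - Tri.P A M B)) :
    ∀ X Y, δ n ((1 - Tri.P A M B) * X * (1 - Tri.P A M B) * Y * (1 - Tri.P A M B)) =
      ∑ ij ∈ Finset.HasAntidiagonal.antidiagonal n,
        δ ij.1 ((1 - Tri.P A M B) * X * (1 - Tri.P A M B)) *
          τ ij.2 ((1 - Tri.P A M B) * Y * (1 - Tri.P A M B)) :=
  map_corner_mul_corner_eq_sum_antidiagonal Tri.isIdempotentElem_P.one_sub δ τ n hτHD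
    (fun k X ↦ (hτQUQ k X).mul_one_sub_P) hQXQ

/-- Step 5(4) of Theorem 3.1: if `δ_m(QXQ) = Σ_{i+j=m} δ_i(Q)τ_j(QXQ)Q` for all
`m ≤ n`, then `δ_n(QXQYQ) = Σ_{i+j=n} δ_i(QXQ)τ_j(QYQ)`. -/
theorem stmt12 (δ τ : ℕ → Tri A M B → Tri A M B) (n : ℕ)
    (hδ0 : δ 0 = id) (hτ0 : τ 0 = id)
    (hτHD : ∀ k X Y, τ k (X * Y) = ∑ ij ∈ Finset.HasAntidiagonal.antidiagonal k, τ ij.1 X * τ ij.2 Y)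
    (hτQ : ∀ k, 1 ≤ k → Tri.inPUQ (τ k (1 - Tri.P A M B)))
    (hτQUQ : ∀ j X, Tri.inQUQQ (τ j ((1 - Tri.P A M B) * X * (1 - Tri.P A M B))))
    (hδiQ : ∀ i ≤ n, Tri.inQUQQ (δ i (1 - Tri.P A M B)))
    (hQXQ : ∀ m ≤ n, ∀ X, δ m ((1 - Tri.P A M B) * X * (1 - Tri.P A M B)) =
      ∑ ij ∈ Finset.HasAntidiagonal.antidiagonal m,
        δ ij.1 (1 - Tri.P A M B) *
          τ ij.2 ((1 - Tri.P A M B) * X * (1 - Tri.P A M B)) * (1 - Tri.P A M B)) :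
    ∀ X Y, δ n ((1 - Tri.P A M B) * X * (1 - Tri.P A M B) * Y * (1 - Tri.P A M B)) =
      ∑ ij ∈ Finset.HasAntidiagonal.antidiagonal n,
        δ ij.1 ((1 - Tri.P A M B) * X * (1 - Tri.P A M B)) *
          τ ij.2 ((1 - Tri.P A M B) * Y * (1 - Tri.P A M B)) :=
  stmt12_general δ τ n hτHD hτQUQ hQXQ
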